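/- Each ψ_{n,m}^{α,β} is an eigenfunction of the operator Δ̃_{α,β} = -∂²/(∂z∂z̄) + α z ∂/∂z - (β/z) ∂/∂z̄ with eigenvalue α m: that is, Δ̃_{α,β} ψ_{n,m}^{α,β} = α m ψ_{n,m}^{α,β} on ℂ*. -/

import Mathlib

open Complex MeasureTheory

noncomputable def wdz (f : ℂ → ℂ) (z : ℂ) : ℂ :=
  (1/2) * (fderiv ℝ f z 1 - Complex.I * fderiv ℝ f z Complex.I)

noncomputable def wdzbar (f : ℂ → ℂ) (z : ℂ) : ℂ :=
  (1/2) * (fderiv ℝ f z 1 + Complex.I * fderiv ℝ f z Complex.I)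

/-- The poly-meromorphic Itô–Hermite function `ψ_{n,m}^{α,β}`, defined via the
Rodrigues formula with iterated Wirtinger derivatives and principal-branch powers. -/
noncomputable def psi (α β : ℝ) (n : ℕ) (m : ℤ) (z : ℂ) : ℂ :=
  (-1 : ℂ)^n * z ^ (-(β:ℂ)) * Complex.exp (α * ‖z‖ ^ 2) *
    (wdz^[n] (fun w => w ^ ((β:ℂ) + (m:ℂ)) * Complex.exp (-(α * ‖w‖ ^ 2)))) z

/-- Generalized Laguerre polynomial `L_n^{(γ)}(x)` with complex parameter and argument. -/
noncomputable def genLaguerre (n : ℕ) (γ : ℂ) (x : ℂ) : ℂ :=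
  ∑ k ∈ Finset.range (n+1),
    (-1 : ℂ)^k * (∏ j ∈ Finset.range (n-k), (γ + k + 1 + j)) /
      ((n-k).factorial * k.factorial) * x^k

/-- Itô–Hermite polynomial `H_{p,q}^α(z, z̄)`. -/
noncomputable def IH (α : ℝ) (p q : ℕ) (z : ℂ) : ℂ :=
  (-1 : ℂ)^(p+q) * Complex.exp (α * ‖z‖ ^ 2) *
    (wdzbar^[p] (wdz^[q] (fun w => Complex.exp (-(α * ‖w‖ ^ 2))))) z

/-!
On an open set avoiding `0` on which the branches of `z ^ (β + m - k)` are holomorphic (the slit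
plane; all of `ℂ*` if `β + m ∈ ℤ` or `n = 0`), the Rodrigues formula gives
`ψ = (-1)ⁿ z^(m-n) Q(α|z|²)` with a polynomial `Q` solving the Laguerre equation
`t Q'' + (β + m - n + 1 - t) Q' + n Q = 0`, and a direct Wirtinger computation turns this equation
into the eigenvalue equation.

On the negative real axis, for `β + m ∉ ℤ` and `n ≥ 1`, the principal branch jumps, so the
Wirtinger derivatives there are the junk value `0`: `ψ` and `∂ψ/∂z̄` vanish on the axis and are not
real-differentiable at its points, because a function vanishing on the axis and differentiable at
`x` forces `Q` and `Q'` to have the common root `αx²`, impossible for a nonzero Laguerre solution.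
Both sides of the equation are then `0`.
-/

open Polynomial Filter Topology ComplexConjugate

noncomputable section

def wirtingerCLM (a b : ℂ) : ℂ →L[ℝ] ℂ :=
  a • ContinuousLinearMap.id ℝ ℂ + b • conjCLE.toContinuousLinearMap

@[simp] lemma wirtingerCLM_apply (a b v : ℂ) : wirtingerCLM a b v = a * v + b * conj v := by
  simp [wirtingerCLM]

/-- `f` is real-differentiable at `z` with `∂f/∂z = a` and `∂f/∂z̄ = b`. -/
def HasWirtingerAt (f : ℂ → ℂ) (a b z : ℂ) : Prop :=
  HasFDerivAt f (wirtingerCLM a b) z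

section Wirtinger

variable {f g : ℂ → ℂ} {a b a' b' z : ℂ}

lemma HasWirtingerAt.wdz_eq (h : HasWirtingerAt f a b z) : wdz f z = a := by
  rw [wdz, h.fderiv]
  simp only [wirtingerCLM_apply, map_one, conj_I, mul_one]
  linear_combination ((b - a) / 2) * I_sq

lemma HasWirtingerAt.wdzbar_eq (h : HasWirtingerAt f a b z) : wdzbar f z = b := by
  rw [wdzbar, h.fderiv]
  simp only [wirtingerCLM_apply, map_one, conj_I, mul_one]
  linear_combination ((a - b) / 2) * I_sq

lemma HasWirtingerAt.congr (h : HasWirtingerAt f a b z) (ha : a = a') (hb : b = b') :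
    HasWirtingerAt f a' b' z :=
  ha ▸ hb ▸ h

lemma HasDerivAt.hasWirtingerAt {f' : ℂ} (h : HasDerivAt f f' z) : HasWirtingerAt f f' 0 z :=
  (h.hasFDerivAt.restrictScalars ℝ).congr_fderiv (by ext v; simp [mul_comm])

lemma hasWirtingerAt_conj (z : ℂ) : HasWirtingerAt (fun w => conj w) 0 1 z :=
  conjCLE.toContinuousLinearMap.hasFDerivAt.congr_fderiv (by ext v; simp)

lemma HasWirtingerAt.mul (hf : HasWirtingerAt f a b z) (hg : HasWirtingerAt g a' b' z) :
    HasWirtingerAt (fun w => f w * g w) (f z * a' + g z * a) (f z * b' + g z * b) z :=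
  (HasFDerivAt.mul hf hg).congr_fderiv (by ext v; simp; ring)

lemma HasWirtingerAt.const_mul (c : ℂ) (hf : HasWirtingerAt f a b z) :
    HasWirtingerAt (fun w => c * f w) (c * a) (c * b) z :=
  ((hasDerivAt_const z c).hasWirtingerAt.mul hf).congr (by ring) (by ring)

lemma HasDerivAt.comp_hasWirtingerAt {g' : ℂ} (hg : HasDerivAt g g' (f z))
    (hf : HasWirtingerAt f a b z) : HasWirtingerAt (fun w => g (f w)) (g' * a) (g' * b) z :=
  (hg.comp_hasFDerivAt z hf).congr_fderiv (by ext v; simp; ring)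

lemma Filter.EventuallyEq.wdz_eq (h : f =ᶠ[𝓝 z] g) : wdz f z = wdz g z := by
  rw [wdz, wdz, h.fderiv_eq]

lemma Filter.EventuallyEq.wdzbar_eq (h : f =ᶠ[𝓝 z] g) : wdzbar f z = wdzbar g z := by
  rw [wdzbar, wdzbar, h.fderiv_eq]

lemma Filter.EventuallyEq.wdzbar (h : f =ᶠ[𝓝 z] g) : wdzbar f =ᶠ[𝓝 z] wdzbar g :=
  h.eventuallyEq_nhds.mono fun _ hw => hw.wdzbar_eq

lemma wdz_of_not_differentiableAt (h : ¬ DifferentiableAt ℝ f z) : wdz f z = 0 := by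
  simp [wdz, fderiv_zero_of_not_differentiableAt h]

lemma wdzbar_of_not_differentiableAt (h : ¬ DifferentiableAt ℝ f z) : wdzbar f z = 0 := by
  simp [wdzbar, fderiv_zero_of_not_differentiableAt h]

end Wirtinger

section Laguerre

def SolvesLaguerre (a ν : ℂ) (P : ℂ[X]) : Prop :=
  X * derivative (derivative P) + (C (a + 1) - X) * derivative P + C ν * P = 0

lemma SolvesLaguerre.derivative {a ν : ℂ} {P : ℂ[X]} (h : SolvesLaguerre a ν P) :
    SolvesLaguerre (a + 1) (ν - 1) (derivative P) := by
  have h' := congrArg Polynomial.derivative h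
  unfold SolvesLaguerre at *
  simp only [derivative_mul, derivative_C, derivative_X, derivative_one,
    derivative_zero, zero_mul, one_mul, zero_sub, zero_add, map_add, map_sub, map_one] at h' ⊢
  linear_combination h'

/-- At a double root `t ≠ 0` the equation forces `P''(t) = 0`, and `P'` solves a Laguerre
equation of lower degree. -/
lemma SolvesLaguerre.eq_zero_of_eval_eq_zero {a ν t : ℂ} {P : ℂ[X]} (h : SolvesLaguerre a ν P)
    (ht : t ≠ 0) (h0 : P.eval t = 0) (h1 : P.derivative.eval t = 0) : P = 0 := by
  induction hd : P.natDegree using Nat.strong_induction_on generalizing a ν P with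
  | _ d ih =>
    have hP' : P.derivative = 0 := by
      rcases eq_or_ne d 0 with rfl | hd0
      · exact derivative_eq_zero.mpr hd
      have h2 : t * P.derivative.derivative.eval t = 0 := by
        have := congrArg (eval t) h
        simp only [eval_add, eval_mul, eval_X, eval_C, eval_sub, eval_zero] at this
        linear_combination this - (a + 1 - t) * h1 - ν * h0
      exact ih _ (hd ▸ natDegree_derivative_lt (hd ▸ hd0)) h.derivative h1
        ((mul_eq_zero.mp h2).resolve_left ht) rfl
    rw [eq_C_of_derivative_eq_zero hP'] at h0 ⊢
    simpa using h0

lemma SolvesLaguerre.C_mul {a ν : ℂ} {P : ℂ[X]} (h : SolvesLaguerre a ν P) (c : ℂ) :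
    SolvesLaguerre a ν (C c * P) := by
  unfold SolvesLaguerre at *
  simp only [derivative_mul, derivative_C, zero_mul, zero_add]
  linear_combination C c * h

/-- `∂_z^k (z^γ e^{-t}) = z^(γ-k) e^{-t} Q_k(t)` for `t = α z z̄`. -/
def rodriguesPoly (γ : ℂ) : ℕ → ℂ[X]
  | 0 => 1
  | k + 1 => C (γ - k) * rodriguesPoly γ k +
      X * (derivative (rodriguesPoly γ k) - rodriguesPoly γ k)

lemma rodriguesPoly_succ (γ : ℂ) (k : ℕ) : rodriguesPoly γ (k + 1) =
    C (γ - k) * rodriguesPoly γ k + X * (derivative (rodriguesPoly γ k) - rodriguesPoly γ k) :=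
  rfl

lemma solvesLaguerre_rodriguesPoly (γ : ℂ) (k : ℕ) :
    SolvesLaguerre (γ - k) k (rodriguesPoly γ k) := by
  induction k with
  | zero => simp [SolvesLaguerre, rodriguesPoly]
  | succ k ih =>
    have ih' := congrArg Polynomial.derivative ih
    unfold SolvesLaguerre at ih ih' ⊢
    rw [rodriguesPoly_succ]
    simp only [derivative_mul, derivative_C, derivative_X,
      derivative_one, derivative_natCast, derivative_zero, zero_mul, one_mul, zero_add, add_zero,
      sub_zero, zero_sub, map_add, map_sub, map_one, map_natCast, Nat.cast_succ] at ih ih' ⊢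
    linear_combination (C γ - (k : ℂ[X]) - X) * ih + X * ih'

lemma eval_zero_rodriguesPoly (γ : ℂ) (k : ℕ) :
    (rodriguesPoly γ k).eval 0 = ∏ j ∈ Finset.range k, (γ - j) := by
  induction k with
  | zero => simp [rodriguesPoly]
  | succ k ih =>
    simp [rodriguesPoly_succ, ih, Finset.prod_range_succ, mul_comm]

variable {γ : ℂ}

lemma rodriguesPoly_ne_zero (hγ : ∀ j : ℤ, γ ≠ j) (k : ℕ) : rodriguesPoly γ k ≠ 0 := by
  intro h
  have := eval_zero_rodriguesPoly γ k
  rw [h, eval_zero, eq_comm, Finset.prod_eq_zero_iff] at this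
  obtain ⟨j, -, hj⟩ := this
  exact hγ j (by simpa [sub_eq_zero] using hj)

lemma derivative_rodriguesPoly_ne_zero (hγ : ∀ j : ℤ, γ ≠ j) {k : ℕ} (hk : k ≠ 0) :
    derivative (rodriguesPoly γ k) ≠ 0 := by
  intro h
  have := solvesLaguerre_rodriguesPoly γ k
  simp only [SolvesLaguerre, h, derivative_zero, mul_zero, add_zero, zero_add,
    mul_eq_zero, C_eq_zero, Nat.cast_eq_zero] at this
  exact this.elim hk (rodriguesPoly_ne_zero hγ k)

end Laguerre

lemma zpow_eq_zpow_sub_one_mul {G₀ : Type*} [GroupWithZero G₀] {a : G₀} (ha : a ≠ 0) (k : ℤ) :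
    a ^ k = a ^ (k - 1) * a := by
  rw [← zpow_add_one₀ ha, sub_add_cancel]

section Model

variable (α : ℝ)

def scaledNormSq (z : ℂ) : ℂ := α * (z * conj z)

lemma ofReal_mul_norm_sq (z : ℂ) : (α : ℂ) * (‖z‖ : ℂ) ^ 2 = scaledNormSq α z := by
  rw [scaledNormSq, mul_conj, ← ofReal_pow, Complex.sq_norm]

lemma hasWirtingerAt_scaledNormSq (z : ℂ) :
    HasWirtingerAt (scaledNormSq α) (α * conj z) (α * z) z :=
  (((hasDerivAt_id z).hasWirtingerAt.mul (hasWirtingerAt_conj z)).const_mul (α : ℂ)).congr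
    (by simp) (by simp)

variable {α}

lemma scaledNormSq_ne_zero (hα : α ≠ 0) {z : ℂ} (hz : z ≠ 0) : scaledNormSq α z ≠ 0 := by
  simp [scaledNormSq, hα, hz]

lemma hasWirtingerAt_mul_comp_scaledNormSq {p F : ℂ → ℂ} {p' F' z : ℂ} (hp : HasDerivAt p p' z)
    (hF : HasDerivAt F F' (scaledNormSq α z)) :
    HasWirtingerAt (fun w => p w * F (scaledNormSq α w))
      (p' * F (scaledNormSq α z) + p z * F' * α * conj z) (p z * F' * α * z) z :=
  (hp.hasWirtingerAt.mul (hF.comp_hasWirtingerAt (hasWirtingerAt_scaledNormSq α z))).congr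
    (by ring) (by ring)

lemma Polynomial.hasDerivAt_exp_neg_mul_eval (Q : ℂ[X]) (t : ℂ) :
    HasDerivAt (fun s => exp (-s) * Q.eval s) (exp (-t) * (Q.derivative - Q).eval t) t :=
  ((hasDerivAt_neg t).cexp.mul (Q.hasDerivAt t)).congr_deriv (by rw [eval_sub]; ring)

lemma hasDerivAt_cpow_intCast (j : ℤ) {z : ℂ} (hz : z ≠ 0) :
    HasDerivAt (fun w => w ^ (j : ℂ)) (j * z ^ ((j : ℂ) - 1)) z := by
  simp_rw [cpow_intCast, show (j : ℂ) - 1 = ((j - 1 : ℤ) : ℂ) by push_cast; ring, cpow_intCast]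
  exact hasDerivAt_zpow j z (.inl hz)

variable (α)

def cpowGauss (c : ℂ) (Q : ℂ[X]) (z : ℂ) : ℂ :=
  z ^ c * (exp (-scaledNormSq α z) * Q.eval (scaledNormSq α z))

lemma wdz_cpowGauss {c z : ℂ} (Q : ℂ[X]) (hz : z ≠ 0)
    (hc : HasDerivAt (fun w => w ^ c) (c * z ^ (c - 1)) z) :
    wdz (cpowGauss α c Q) z = cpowGauss α (c - 1) (C c * Q + X * (Q.derivative - Q)) z := by
  have h : HasWirtingerAt (cpowGauss α c Q) _ _ z :=
    hasWirtingerAt_mul_comp_scaledNormSq hc (Q.hasDerivAt_exp_neg_mul_eval _)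
  have hpow : z ^ c = z ^ (c - 1) * z := by
    simpa using cpow_add (c - 1) 1 hz
  rw [h.wdz_eq, cpowGauss, scaledNormSq, hpow]
  simp only [eval_add, eval_mul, eval_C, eval_X, eval_sub]
  ring

lemma iterate_wdz_cpowGauss {U : Set ℂ} (hU : IsOpen U) (hU0 : (0 : ℂ) ∉ U) {c : ℂ} {n : ℕ}
    (hc : ∀ k < n, ∀ z ∈ U, HasDerivAt (fun w => w ^ (c - k)) ((c - k) * z ^ (c - k - 1)) z) :
    ∀ z ∈ U, wdz^[n] (cpowGauss α c 1) z = cpowGauss α (c - n) (rodriguesPoly c n) z := by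
  induction n with
  | zero => simp [rodriguesPoly]
  | succ n ih =>
    intro z hz
    have ih' := ih fun k hk => hc k (by omega)
    rw [Function.iterate_succ_apply', (eventuallyEq_of_mem (hU.mem_nhds hz) ih').wdz_eq,
      wdz_cpowGauss α _ (ne_of_mem_of_not_mem hz hU0) (hc n (by omega) z hz), rodriguesPoly_succ]
    congr 1
    push_cast
    ring

end Model

section PsiForm

variable (α : ℝ)

def psiForm (n : ℕ) (m : ℤ) (P : ℂ[X]) (z : ℂ) : ℂ :=
  (-1) ^ n * z ^ (m - n) * P.eval (scaledNormSq α z)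

variable {α} (n : ℕ) (m : ℤ) (P : ℂ[X]) {z : ℂ}

lemma hasWirtingerAt_psiForm (hz : z ≠ 0) :
    HasWirtingerAt (psiForm α n m P)
      ((-1) ^ n * (((m - n : ℤ) : ℂ) * z ^ (m - n - 1)) * P.eval (scaledNormSq α z) +
        (-1) ^ n * z ^ (m - n) * P.derivative.eval (scaledNormSq α z) * α * conj z)
      ((-1) ^ n * z ^ (m - n) * P.derivative.eval (scaledNormSq α z) * α * z) z :=
  hasWirtingerAt_mul_comp_scaledNormSq ((hasDerivAt_zpow _ z (.inl hz)).const_mul _)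
    (P.hasDerivAt _)

lemma wdz_psiForm (hz : z ≠ 0) :
    wdz (psiForm α n m P) z = (-1) ^ n * z ^ (m - n - 1) *
      ((m - n) * P.eval (scaledNormSq α z) +
        scaledNormSq α z * P.derivative.eval (scaledNormSq α z)) := by
  rw [(hasWirtingerAt_psiForm n m P hz).wdz_eq, scaledNormSq, zpow_eq_zpow_sub_one_mul hz (m - n)]
  push_cast
  ring

lemma wdzbar_psiForm (hz : z ≠ 0) :
    wdzbar (psiForm α n m P) z = psiForm α n (m + 1) (C (α : ℂ) * P.derivative) z := by
  rw [(hasWirtingerAt_psiForm n m P hz).wdzbar_eq, psiForm,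
    show m + 1 - n = (m - n : ℤ) + 1 by ring, zpow_add_one₀ hz]
  simp only [eval_mul, eval_C]
  ring

lemma psiForm_eigen (β : ℝ) (hP : SolvesLaguerre (β + m - n) n P) (hz : z ≠ 0) :
    -(wdz (wdzbar (psiForm α n m P)) z) + α * z * wdz (psiForm α n m P) z
        - (β / z) * wdzbar (psiForm α n m P) z = α * m * psiForm α n m P z := by
  have hbar : wdzbar (psiForm α n m P) =ᶠ[𝓝 z] psiForm α n (m + 1) (C (α : ℂ) * P.derivative) :=
    eventually_ne_nhds hz |>.mono fun w hw => wdzbar_psiForm n m P hw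
  have hpow : z ^ (m + 1 - n) = z ^ (m - n - 1) * z * z := by
    rw [show m + 1 - n = m - n + 1 by ring, zpow_add_one₀ hz, zpow_eq_zpow_sub_one_mul hz (m - n)]
  rw [hbar.wdz_eq, wdz_psiForm _ _ _ hz, wdz_psiForm _ _ _ hz, wdzbar_psiForm _ _ _ hz,
    psiForm, psiForm, show m + 1 - n - 1 = (m - n : ℤ) by ring, hpow,
    zpow_eq_zpow_sub_one_mul hz (m - n)]
  have hODE := congrArg (eval (scaledNormSq α z)) hP
  simp only [eval_add, eval_mul, eval_X, eval_C, eval_sub, eval_zero, derivative_mul,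
    derivative_C, zero_mul, zero_add] at hODE ⊢
  field_simp
  push_cast
  linear_combination (-α : ℂ) * hODE

end PsiForm

section Psi

variable {α β : ℝ} {n : ℕ} {m : ℤ}

lemma psi_eq_iterate_wdz_cpowGauss (z : ℂ) : psi α β n m z =
    (-1) ^ n * z ^ (-(β : ℂ)) * exp (scaledNormSq α z) * wdz^[n] (cpowGauss α (β + m) 1) z := by
  have hinner : (fun w : ℂ => w ^ ((β : ℂ) + m) * exp (-(α * ‖w‖ ^ 2))) =
      cpowGauss α (β + m) 1 := by
    funext w
    simp [cpowGauss, ofReal_mul_norm_sq]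
  rw [psi, hinner, ofReal_mul_norm_sq]

lemma psi_eqOn_psiForm {U : Set ℂ} (hU : IsOpen U) (hU0 : (0 : ℂ) ∉ U)
    (hc : ∀ k < n, ∀ z ∈ U, HasDerivAt (fun w => w ^ ((β : ℂ) + m - k))
      (((β : ℂ) + m - k) * z ^ ((β : ℂ) + m - k - 1)) z) :
    Set.EqOn (psi α β n m) (psiForm α n m (rodriguesPoly (β + m) n)) U := by
  intro z hz
  have hpow : z ^ (-(β : ℂ)) * z ^ ((β : ℂ) + m - n) = z ^ (m - n : ℤ) := by
    rw [← cpow_add _ _ (ne_of_mem_of_not_mem hz hU0), ← cpow_intCast]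
    push_cast
    ring_nf
  rw [psi_eq_iterate_wdz_cpowGauss, iterate_wdz_cpowGauss α hU hU0 hc z hz, cpowGauss, psiForm,
    ← hpow]
  calc _ = (-1) ^ n * (z ^ (-(β : ℂ)) * z ^ ((β : ℂ) + m - n)) *
        (exp (scaledNormSq α z) * exp (-scaledNormSq α z)) *
        (rodriguesPoly (β + m) n).eval (scaledNormSq α z) := by ring
    _ = _ := by rw [← exp_add, add_neg_cancel, exp_zero, mul_one]

lemma psi_eqOn_slitPlane :
    Set.EqOn (psi α β n m) (psiForm α n m (rodriguesPoly (β + m) n)) slitPlane :=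
  psi_eqOn_psiForm isOpen_slitPlane zero_notMem_slitPlane
    fun _ _ _ hw => (hasStrictDerivAt_cpow_const hw).hasDerivAt

lemma psi_eventuallyEq_psiForm {z : ℂ} (hz : z ≠ 0)
    (h : z ∈ slitPlane ∨ n = 0 ∨ ∃ j : ℤ, (β : ℂ) + m = j) :
    psi α β n m =ᶠ[𝓝 z] psiForm α n m (rodriguesPoly (β + m) n) := by
  have hU0 : (0 : ℂ) ∉ ({0}ᶜ : Set ℂ) := by simp
  obtain hzs | rfl | ⟨j, hj⟩ := h
  · exact eventuallyEq_of_mem (isOpen_slitPlane.mem_nhds hzs) psi_eqOn_slitPlane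
  · exact eventuallyEq_of_mem (isOpen_compl_singleton.mem_nhds hz)
      (psi_eqOn_psiForm isOpen_compl_singleton hU0 fun k hk => absurd hk k.not_lt_zero)
  · refine eventuallyEq_of_mem (isOpen_compl_singleton.mem_nhds hz)
      (psi_eqOn_psiForm isOpen_compl_singleton hU0 fun k _ w hw => ?_)
    have := hasDerivAt_cpow_intCast (j - k) hw
    rw [hj]
    push_cast at this ⊢
    exact this

end Psi

section NegativeAxis

open scoped Real

lemma cpow_eq_exp_mul_neg_cpow {z : ℂ} (hz : 0 < z.im ∨ z.im = 0 ∧ z.re < 0) (c : ℂ) :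
    z ^ c = exp (c * π * I) * (-z) ^ c := by
  have hz0 : z ≠ 0 := by rintro rfl; simp at hz
  rw [cpow_def_of_ne_zero hz0, cpow_def_of_ne_zero (neg_ne_zero.2 hz0), ← exp_add, log, log,
    norm_neg, arg_neg_eq_arg_sub_pi_iff.2 hz]
  push_cast
  ring_nf

lemma cpow_eq_exp_neg_mul_neg_cpow {z : ℂ} (hz : z.im < 0) (c : ℂ) :
    z ^ c = exp (-(c * π * I)) * (-z) ^ c := by
  have hz0 : z ≠ 0 := by rintro rfl; simp at hz
  rw [cpow_def_of_ne_zero hz0, cpow_def_of_ne_zero (neg_ne_zero.2 hz0), ← exp_add, log, log,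
    norm_neg, arg_neg_eq_arg_add_pi_iff.2 (.inl hz)]
  push_cast
  ring_nf

lemma not_continuousAt_cpow {c : ℂ} (hc : ∀ j : ℤ, c ≠ j) {x : ℝ} (hx : x < 0) :
    ¬ ContinuousAt (fun w => w ^ c) (x : ℂ) := by
  intro hcont
  let L := 𝓝[{w : ℂ | w.im < 0}] (x : ℂ)
  have : L.NeBot := mem_closure_iff_nhdsWithin_neBot.1 (by simp [closure_setOfPred_im_lt])
  have hnx : -(x : ℂ) ∈ slitPlane := by simpa using hx
  have hbranch : ContinuousAt (fun w : ℂ => exp (-(c * π * I)) * (-w) ^ c) x :=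
    continuousAt_const.mul
      ((hasStrictDerivAt_cpow_const hnx).hasDerivAt.continuousAt.comp continuousAt_neg)
  have hlim := tendsto_nhds_unique (f := fun w => w ^ c) (l := L)
    (hcont.tendsto.mono_left nhdsWithin_le_nhds)
    ((hbranch.tendsto.mono_left nhdsWithin_le_nhds).congr'
      (eventually_nhdsWithin_of_forall fun w hw => (cpow_eq_exp_neg_mul_neg_cpow hw c).symm))
  rw [cpow_eq_exp_mul_neg_cpow (.inr ⟨by simp, by simpa⟩)] at hlim
  obtain ⟨j, hj⟩ := exp_eq_exp_iff_exists_int.1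
    (mul_right_cancel₀ (by simp [cpow_eq_zero_iff, hx.ne]) hlim)
  refine hc j (mul_right_cancel₀ (by simp [Real.pi_ne_zero] : (2 * π * I : ℂ) ≠ 0) ?_)
  linear_combination hj

/-- `h` and `N` have the same derivative at `x`, computed within the upper half-plane, and the
derivative of `h` along the axis is `0`. -/
lemma HasFDerivAt.eq_zero_and_apply_one_eq_zero {h N : ℂ → ℂ} {B : ℂ →L[ℝ] ℂ} {x : ℝ}
    (hN : HasFDerivAt N B x) (hx : x < 0) (hneg : ∀ y : ℝ, y < 0 → h y = 0)
    (hup : ∀ z : ℂ, 0 < z.im → h z = N z) (hh : DifferentiableAt ℝ h x) :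
    N x = 0 ∧ B 1 = 0 := by
  have hxH : (x : ℂ) ∈ closure {z : ℂ | 0 < z.im} := by simp [closure_setOfPred_lt_im]
  have hNx : N x = 0 := by
    let L := 𝓝[{z : ℂ | 0 < z.im}] (x : ℂ)
    have : L.NeBot := mem_closure_iff_nhdsWithin_neBot.1 hxH
    refine tendsto_nhds_unique (f := N) (l := L)
      (hN.continuousAt.tendsto.mono_left nhdsWithin_le_nhds) ?_
    rw [← hneg x hx]
    exact (hh.continuousAt.tendsto.mono_left nhdsWithin_le_nhds).congr'
      (eventually_nhdsWithin_of_forall hup)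
  have hB : fderiv ℝ h x = B := by
    have hint : (interior {z : ℂ | 0 < z.im}).Nonempty :=
      ⟨I, (isOpen_lt continuous_const continuous_im).interior_eq.symm ▸ by simp⟩
    refine (uniqueDiffWithinAt_convex (convex_halfSpace_im_gt 0) hint hxH).eq ?_
      hN.hasFDerivWithinAt
    exact hh.hasFDerivAt.hasFDerivWithinAt.congr (fun z hz => (hup z hz).symm)
      (by rw [hNx, hneg x hx])
  have hreal := hh.hasFDerivAt.comp_hasDerivAt x (hasDerivAt_id x).ofReal_comp
  have hzero : HasDerivAt (h ∘ ofReal) 0 x :=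
    (hasDerivAt_const x 0).congr_of_eventuallyEq
      ((eventually_lt_nhds hx).mono fun y hy => hneg y hy)
  exact ⟨hNx, by simpa [hB] using hreal.unique hzero⟩

variable {α : ℝ}

lemma eq_zero_and_deriv_eq_zero_of_differentiableAt {h p F : ℂ → ℂ} {p' F' : ℂ} {x : ℝ}
    (hα : α ≠ 0) (hx : x < 0) (hp : HasDerivAt p p' x) (hpx : p x ≠ 0)
    (hF : HasDerivAt F F' (scaledNormSq α x)) (hneg : ∀ y : ℝ, y < 0 → h y = 0)
    (hup : ∀ z : ℂ, 0 < z.im → h z = p z * F (scaledNormSq α z))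
    (hh : DifferentiableAt ℝ h x) : F (scaledNormSq α x) = 0 ∧ F' = 0 := by
  obtain ⟨h0, h1⟩ := (hasWirtingerAt_mul_comp_scaledNormSq hp hF).eq_zero_and_apply_one_eq_zero
    hx hneg hup hh
  have hF0 := (mul_eq_zero.1 h0).resolve_left hpx
  refine ⟨hF0, ?_⟩
  simp only [wirtingerCLM_apply, hF0, conj_ofReal, map_one] at h1
  have : p x * (2 * α * x) * F' = 0 := by linear_combination h1
  exact (mul_eq_zero.1 this).resolve_left (mul_ne_zero hpx (by simp [hα, hx.ne]))

lemma not_differentiableAt_of_solvesLaguerre {h p : ℂ → ℂ} {p' a ν : ℂ} {Q : ℂ[X]} {x : ℝ}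
    (hα : α ≠ 0) (hx : x < 0) (hp : HasDerivAt p p' x) (hpx : p x ≠ 0)
    (hQ : SolvesLaguerre a ν Q) (hQ0 : Q ≠ 0) (hneg : ∀ y : ℝ, y < 0 → h y = 0)
    (hup : ∀ z : ℂ, 0 < z.im → h z = p z * Q.eval (scaledNormSq α z)) :
    ¬ DifferentiableAt ℝ h x := fun hh =>
  have ⟨h0, h1⟩ := eq_zero_and_deriv_eq_zero_of_differentiableAt hα hx hp hpx (Q.hasDerivAt _)
    hneg hup hh
  hQ0 (hQ.eq_zero_of_eval_eq_zero (scaledNormSq_ne_zero hα (by simpa using hx.ne)) h0 h1)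

/-- For `k = 0` the branch cut is a jump. For `k ≥ 1` the iterate is the junk value `0` on the
axis (the previous iterate is not differentiable there) and the branch
`e^{iπc} (-z)^c e^{-t} Q(t)` of the upper half-plane, which `Q`'s simple roots make incompatible. -/
lemma not_differentiableAt_iterate_wdz_cpowGauss (hα : α ≠ 0) {γ : ℂ} (hγ : ∀ j : ℤ, γ ≠ j)
    (k : ℕ) {x : ℝ} (hx : x < 0) : ¬ DifferentiableAt ℝ (wdz^[k] (cpowGauss α γ 1)) x := by
  induction k generalizing x with
  | zero =>
    intro hd
    refine not_continuousAt_cpow hγ hx ?_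
    have hcpow : (fun w => w ^ γ) = fun w => cpowGauss α γ 1 w * exp (scaledNormSq α w) := by
      funext w
      simp [cpowGauss, mul_assoc, ← exp_add]
    rw [hcpow]
    exact hd.continuousAt.mul (HasFDerivAt.continuousAt (hasWirtingerAt_scaledNormSq α _)).cexp
  | succ k ih =>
    intro hd
    set c := γ - (k + 1 : ℕ)
    set Q := rodriguesPoly γ (k + 1)
    have hnx : -(x : ℂ) ∈ slitPlane := by simpa using hx
    have hp : HasDerivAt (fun w => exp (c * π * I) * (-w) ^ c)
        (exp (c * π * I) * (c * (-(x : ℂ)) ^ (c - 1) * -1)) x :=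
      ((hasStrictDerivAt_cpow_const hnx).hasDerivAt.comp (x : ℂ) (hasDerivAt_neg _)).const_mul _
    have hup : ∀ z : ℂ, 0 < z.im → wdz^[k + 1] (cpowGauss α γ 1) z =
        exp (c * π * I) * (-z) ^ c * (exp (-scaledNormSq α z) * Q.eval (scaledNormSq α z)) := by
      intro z hz
      rw [iterate_wdz_cpowGauss α isOpen_slitPlane zero_notMem_slitPlane
        (fun _ _ w hw => (hasStrictDerivAt_cpow_const hw).hasDerivAt) z (.inr hz.ne'),
        cpowGauss, cpow_eq_exp_mul_neg_cpow (.inl hz)]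
    have hneg : ∀ y : ℝ, y < 0 → wdz^[k + 1] (cpowGauss α γ 1) y = 0 := fun y hy => by
      rw [Function.iterate_succ_apply']
      exact wdz_of_not_differentiableAt (ih hy)
    obtain ⟨h0, h1⟩ := eq_zero_and_deriv_eq_zero_of_differentiableAt hα hx hp
      (by simp [cpow_eq_zero_iff, hx.ne]) (Q.hasDerivAt_exp_neg_mul_eval _) hneg hup hd
    have hQ0 := (mul_eq_zero.1 h0).resolve_left (exp_ne_zero _)
    have hQ1 := (mul_eq_zero.1 h1).resolve_left (exp_ne_zero _)
    rw [eval_sub, hQ0, sub_zero] at hQ1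
    exact rodriguesPoly_ne_zero hγ _ ((solvesLaguerre_rodriguesPoly γ _).eq_zero_of_eval_eq_zero
      (scaledNormSq_ne_zero hα (by simpa using hx.ne)) hQ0 hQ1)

variable {β : ℝ} {n : ℕ} {m : ℤ} {x : ℝ}

lemma psi_ofReal_eq_zero (hα : α ≠ 0) (hγ : ∀ j : ℤ, (β : ℂ) + m ≠ j) (hn : n ≠ 0)
    (hx : x < 0) : psi α β n m x = 0 := by
  obtain ⟨k, rfl⟩ := Nat.exists_eq_succ_of_ne_zero hn
  rw [psi_eq_iterate_wdz_cpowGauss, Function.iterate_succ_apply',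
    wdz_of_not_differentiableAt (not_differentiableAt_iterate_wdz_cpowGauss hα hγ k hx), mul_zero]

lemma not_differentiableAt_psi (hα : α ≠ 0) (hγ : ∀ j : ℤ, (β : ℂ) + m ≠ j) (hn : n ≠ 0)
    (hx : x < 0) : ¬ DifferentiableAt ℝ (psi α β n m) x := by
  have hx0 : (x : ℂ) ≠ 0 := by exact_mod_cast hx.ne
  exact not_differentiableAt_of_solvesLaguerre hα hx
    ((hasDerivAt_zpow (m - n) _ (.inl hx0)).const_mul ((-1) ^ n))
    (mul_ne_zero (by simp) (zpow_ne_zero _ hx0)) (solvesLaguerre_rodriguesPoly _ n)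
    (rodriguesPoly_ne_zero hγ n) (fun _ hy => psi_ofReal_eq_zero hα hγ hn hy)
    fun _ hz => psi_eqOn_slitPlane (.inr hz.ne')

lemma not_differentiableAt_wdzbar_psi (hα : α ≠ 0) (hγ : ∀ j : ℤ, (β : ℂ) + m ≠ j) (hn : n ≠ 0)
    (hx : x < 0) : ¬ DifferentiableAt ℝ (wdzbar (psi α β n m)) x := by
  have hx0 : (x : ℂ) ≠ 0 := by exact_mod_cast hx.ne
  refine not_differentiableAt_of_solvesLaguerre hα hx
    ((hasDerivAt_zpow (m + 1 - n) _ (.inl hx0)).const_mul ((-1) ^ n))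
    (mul_ne_zero (by simp) (zpow_ne_zero _ hx0))
    ((solvesLaguerre_rodriguesPoly _ n).derivative.C_mul α)
    (mul_ne_zero (by simpa using hα) (derivative_rodriguesPoly_ne_zero hγ hn))
    (fun _ hy => wdzbar_of_not_differentiableAt (not_differentiableAt_psi hα hγ hn hy))
    fun z hz => ?_
  have hzs : z ∈ slitPlane := .inr hz.ne'
  rw [(eventuallyEq_of_mem (isOpen_slitPlane.mem_nhds hzs) psi_eqOn_slitPlane).wdzbar_eq,
    wdzbar_psiForm _ _ _ (slitPlane_ne_zero hzs)]
  rfl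

end NegativeAxis

end

theorem stmt9_general (α β : ℝ) (hα : 0 < α) (n : ℕ) (m : ℤ) (z : ℂ)
    (hz : z ≠ 0) :
    -(wdz (wdzbar (psi α β n m)) z) + (α:ℂ) * z * wdz (psi α β n m) z
        - ((β:ℂ)/z) * wdzbar (psi α β n m) z =
      (α:ℂ) * (m:ℂ) * psi α β n m z := by
  by_cases h : z ∈ slitPlane ∨ n = 0 ∨ ∃ j : ℤ, (β : ℂ) + m = j
  · have hψ := psi_eventuallyEq_psiForm (α := α) hz h
    rw [hψ.wdzbar.wdz_eq, hψ.wdz_eq, hψ.wdzbar_eq, hψ.eq_of_nhds]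
    exact psiForm_eigen n m _ β (solvesLaguerre_rodriguesPoly _ n) hz
  · push Not at h
    obtain ⟨hzs, hn, hγ⟩ := h
    obtain ⟨x, hx, rfl⟩ : ∃ x : ℝ, x < 0 ∧ (x : ℂ) = z := by
      rw [mem_slitPlane_iff, not_or, not_lt, not_ne_iff] at hzs
      refine ⟨z.re, hzs.1.lt_of_ne fun h => hz (Complex.ext h hzs.2), Complex.ext rfl hzs.2.symm⟩
    rw [wdz_of_not_differentiableAt (not_differentiableAt_wdzbar_psi hα.ne' hγ hn hx),
      wdz_of_not_differentiableAt (not_differentiableAt_psi hα.ne' hγ hn hx),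
      wdzbar_of_not_differentiableAt (not_differentiableAt_psi hα.ne' hγ hn hx),
      psi_ofReal_eq_zero hα.ne' hγ hn hx]
    ring

theorem stmt9 (α β : ℝ) (hα : 0 < α) (n : ℕ) (m : ℤ) (hm : -β - 1 < (m:ℝ)) (z : ℂ)
    (hz : z ≠ 0) :
    -(wdz (wdzbar (psi α β n m)) z) + (α:ℂ) * z * wdz (psi α β n m) z
        - ((β:ℂ)/z) * wdzbar (psi α β n m) z =
      (α:ℂ) * (m:ℂ) * psi α β n m z :=
  stmt9_general α β hα n m z hz
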